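/- arXiv:1312.7667 — 5 statements merged into one kernel-verified Lean document; each statement's English description precedes it below -/
import Mathlib

section
/- Let G be a non-locally compact abelian Polish group and let C ⊆ G be a fixed compact set. Then there exists a Borel map t : K(G) × 2^ω × 2^ω → G such that: (1) whenever (K, x, y) ≠ (K', x', y') are elements of K(G) × 2^ω × 2^ω, the sets K − C + t(K, x, y) and K' − C + t(K', x', y') are disjoint; and (2) for every K ∈ K(G) and y ∈ 2^ω, the map x ↦ t(K, x, y) is continuous on 2^ω. -/
/-
Since `G` is not locally compact, no closed ball of its complete invariant metric is totally
bounded, so every `ε`-ball contains points `ρ`-far from any given compact set. Fix a dense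
sequence `(Kᵢ)` in `K(G)` and code `(K, x, y)` at level `n` by `(i, xₙ, yₙ)`, where `Kᵢ` is the
first dense point within `ρₙ / 4` of `K`. Level by level, choose greedily vectors `hₙ(a)`, one
per code, of norm at most `εₙ` and such that `hₙ(a) - hₙ(b)` is `ρₙ`-far from
`(K_b - C) - (K_a - C)`, and let `t` be the sum of the `hₙ` of the codes. If two triples first
differ at level `n`, the difference of their translations is `hₙ(a) - hₙ(b)` up to `4 εₙ₊₁`, while
a common point of the two translated sets would put this difference within `ρₙ / 2` of
`(K_b - C) - (K_a - C)`. The series converges uniformly and each term depends on finitely many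
digits of `x`, which gives measurability and continuity in `x`.
-/

open MeasureTheory Topology TopologicalSpace Pointwise

open Metric Set Filter

theorem IsCompact.sub {α : Type*} [AddGroup α] [TopologicalSpace α] [IsTopologicalAddGroup α]
    {s t : Set α} (hs : IsCompact s) (ht : IsCompact t) : IsCompact (s - t) := by
  rw [sub_eq_add_neg]
  exact hs.add ht.neg

section FarPoints

variable {G : Type*} [NormedAddCommGroup G]

theorem exists_far_from_compact_of_not_locallyCompact [CompleteSpace G]
    (hG : ¬ LocallyCompactSpace G) {ε : ℝ} (hε : 0 < ε) :
    ∃ ρ, 0 < ρ ∧ ρ ≤ ε ∧ ∀ F : Set G, IsCompact F → ∃ g, ‖g‖ ≤ ε ∧ ∀ f ∈ F, ρ < ‖g - f‖ := by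
  have hball : ¬ TotallyBounded (closedBall (0 : G) ε) := fun h =>
    hG ((h.isCompact_of_isClosed isClosed_closedBall).locallyCompactSpace_of_mem_nhds_of_addGroup
      (closedBall_mem_nhds 0 hε))
  obtain ⟨r, hr, hnet⟩ : ∃ r > 0, ∀ s : Set G, s.Finite → ¬ closedBall 0 ε ⊆ ⋃ y ∈ s, ball y r := by
    simpa [totallyBounded_iff] using hball
  refine ⟨min (r / 2) ε, by positivity, min_le_right _ _, fun F hF => ?_⟩
  obtain ⟨s, hs, hFs⟩ := totallyBounded_iff.1 hF.totallyBounded (r / 2) (by positivity)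
  by_contra! hnear
  refine hnet s hs fun g hg => ?_
  obtain ⟨f, hf, hgf⟩ := hnear g (mem_closedBall_zero_iff.1 hg)
  obtain ⟨y, hy, hfy⟩ := mem_iUnion₂.1 (hFs hf)
  refine mem_iUnion₂.2 ⟨y, hy, ?_⟩
  calc dist g y ≤ dist g f + dist f y := dist_triangle _ _ _
    _ < r / 2 + r / 2 := by
      rw [dist_eq_norm]
      exact add_lt_add_of_le_of_lt (hgf.trans (min_le_left _ _)) hfy
    _ = r := add_halves r

theorem exists_seq_sub_far_from_compacts {ε ρ : ℝ}
    (hfar : ∀ F : Set G, IsCompact F → ∃ g, ‖g‖ ≤ ε ∧ ∀ f ∈ F, ρ < ‖g - f‖)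
    (D : ℕ → ℕ → Set G) (hD : ∀ k l, IsCompact (D k l)) :
    ∃ h : ℕ → G, (∀ k, ‖h k‖ ≤ ε) ∧ ∀ k l, k ≠ l → ∀ d ∈ D k l, ρ < ‖h k - h l - d‖ := by
  let F : (k : ℕ) → (Fin k → G) → Set G := fun k prev =>
    ⋃ m : Fin k, (({prev m} + D k m) ∪ ({prev m} - D m k))
  have hF : ∀ k prev, IsCompact (F k prev) := fun k prev => isCompact_iUnion fun m =>
    (isCompact_singleton.add (hD _ _)).union (isCompact_singleton.sub (hD _ _))
  choose g hg_norm hg_far using hfar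
  let h : ℕ → G := Nat.strongRec fun k prev => g (F k fun m => prev m m.2) (hF _ _)
  have h_eq : ∀ k, h k = g (F k fun m => h m) (hF _ _) := Nat.strongRec_eq _
  refine ⟨h, fun k => by rw [h_eq]; exact hg_norm _ _, ?_⟩
  have hlt : ∀ k l, l < k →
      (∀ d ∈ D k l, ρ < ‖h k - h l - d‖) ∧ ∀ d ∈ D l k, ρ < ‖h l - h k - d‖ := by
    intro k l hlk
    have hfar := h_eq k ▸ hg_far (F k fun m => h m) (hF _ _)
    refine ⟨fun d hd => ?_, fun d hd => ?_⟩
    · rw [sub_sub]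
      exact hfar _ (mem_iUnion.2 ⟨⟨l, hlk⟩, .inl (add_mem_add rfl hd)⟩)
    · rw [show h l - h k - d = -(h k - (h l - d)) by abel, norm_neg]
      exact hfar _ (mem_iUnion.2 ⟨⟨l, hlk⟩, .inr (sub_mem_sub rfl hd)⟩)
  intro k l hkl
  rcases hkl.lt_or_gt with hkl | hkl
  exacts [(hlt l k hkl).2, (hlt k l hkl).1]

theorem exists_family_sub_far_from_compacts {ι : Type*} [Encodable ι] {ε ρ : ℝ}
    (hfar : ∀ F : Set G, IsCompact F → ∃ g, ‖g‖ ≤ ε ∧ ∀ f ∈ F, ρ < ‖g - f‖)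
    (D : ι → ι → Set G) (hD : ∀ i j, IsCompact (D i j)) :
    ∃ h : ι → G, (∀ i, ‖h i‖ ≤ ε) ∧ ∀ i j, i ≠ j → ∀ d ∈ D i j, ρ < ‖h i - h j - d‖ := by
  have hfin (k : ℕ) : {i : ι | Encodable.encode i = k}.Finite :=
    Set.Subsingleton.finite fun i hi j hj => Encodable.encode_injective (hi.trans hj.symm)
  obtain ⟨h, hnorm, hsep⟩ := exists_seq_sub_far_from_compacts hfar
    (fun k l => ⋃ i ∈ {i | Encodable.encode i = k}, ⋃ j ∈ {j | Encodable.encode j = l}, D i j)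
    fun k l => (hfin k).isCompact_biUnion fun i _ => (hfin l).isCompact_biUnion fun j _ => hD i j
  exact ⟨h ∘ Encodable.encode, fun i => hnorm _, fun i j hij d hd =>
    hsep _ _ (Encodable.encode_injective.ne hij) d (mem_biUnion rfl (mem_biUnion rfl hd))⟩

/-- `16 εₙ₊₁ ≤ ρₙ` leaves room below `ρₙ` for a tail `4 εₙ₊₁` and two approximation errors
`ρₙ / 4`. -/
theorem exists_far_scales [CompleteSpace G] (hG : ¬ LocallyCompactSpace G) :
    ∃ ε ρ : ℕ → ℝ, (∀ n, 0 < ρ n) ∧ (∀ n, ρ n ≤ ε n) ∧ (∀ n, 16 * ε (n + 1) ≤ ρ n) ∧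
      ∀ n, ∀ F : Set G, IsCompact F → ∃ g, ‖g‖ ≤ ε n ∧ ∀ f ∈ F, ρ n < ‖g - f‖ := by
  choose ρ hρ hρε hfar using fun ε : {ε : ℝ // 0 < ε} =>
    exists_far_from_compact_of_not_locallyCompact (G := G) hG ε.2
  let e : ℕ → {ε : ℝ // 0 < ε} := fun n =>
    Nat.rec ⟨1, one_pos⟩ (fun _ e => ⟨ρ e / 16, by have := hρ e; positivity⟩) n
  refine ⟨fun n => (e n).1, fun n => ρ (e n), fun n => hρ _, fun n => hρε _, fun n => ?_,
    fun n => hfar (e n)⟩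
  show 16 * (ρ (e n) / 16) ≤ ρ (e n)
  linarith

end FarPoints

section Series

variable {G : Type*} [NormedAddCommGroup G] {ε : ℕ → ℝ}

theorem le_mul_half_pow_of_halving (hε : ∀ n, ε (n + 1) ≤ ε n / 2) (N m : ℕ) :
    ε (m + N) ≤ ε N * (1 / 2) ^ m := by
  induction m with
  | zero => simp
  | succ m ih =>
    calc ε (m + 1 + N) = ε (m + N + 1) := by rw [add_right_comm]
      _ ≤ ε (m + N) / 2 := hε _
      _ ≤ ε N * (1 / 2) ^ (m + 1) := by rw [pow_succ]; linarith

theorem summable_of_halving (h0 : ∀ n, 0 ≤ ε n) (hε : ∀ n, ε (n + 1) ≤ ε n / 2) : Summable ε :=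
  (summable_geometric_two.mul_left (ε 0)).of_nonneg_of_le h0 fun m => by
    simpa using le_mul_half_pow_of_halving hε 0 m

variable [CompleteSpace G] {v w : ℕ → G}

theorem summable_of_norm_le_halving (hv : ∀ n, ‖v n‖ ≤ ε n) (hε : ∀ n, ε (n + 1) ≤ ε n / 2) :
    Summable v :=
  .of_norm_bounded (summable_of_halving (fun n => (norm_nonneg _).trans (hv n)) hε) hv

theorem norm_tsum_sub_sum_range_le (hv : ∀ n, ‖v n‖ ≤ ε n) (hε : ∀ n, ε (n + 1) ≤ ε n / 2)
    (N : ℕ) : ‖∑' n, v n - ∑ n ∈ Finset.range N, v n‖ ≤ 2 * ε N := by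
  rw [← (summable_of_norm_le_halving hv hε).sum_add_tsum_nat_add N, add_sub_cancel_left,
    mul_comm]
  exact tsum_of_norm_bounded (hasSum_geometric_two.mul_left (ε N)) fun m =>
    (hv _).trans (le_mul_half_pow_of_halving hε N m)

theorem norm_tsum_sub_tsum_sub_sub_le (hv : ∀ n, ‖v n‖ ≤ ε n) (hw : ∀ n, ‖w n‖ ≤ ε n)
    (hε : ∀ n, ε (n + 1) ≤ ε n / 2) {n : ℕ} (hvw : ∀ m < n, v m = w m) :
    ‖(∑' m, v m - ∑' m, w m) - (v n - w n)‖ ≤ 4 * ε (n + 1) := by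
  have hhead : ∑ m ∈ Finset.range (n + 1), v m - ∑ m ∈ Finset.range (n + 1), w m = v n - w n := by
    rw [Finset.sum_range_succ, Finset.sum_range_succ,
      Finset.sum_congr rfl fun m hm => hvw m (Finset.mem_range.1 hm)]
    abel
  calc ‖(∑' m, v m - ∑' m, w m) - (v n - w n)‖
      = ‖(∑' m, v m - ∑ m ∈ Finset.range (n + 1), v m)
          - (∑' m, w m - ∑ m ∈ Finset.range (n + 1), w m)‖ := by rw [← hhead]; abel_nf
    _ ≤ 2 * ε (n + 1) + 2 * ε (n + 1) :=
      (norm_sub_le _ _).trans (add_le_add (norm_tsum_sub_sum_range_le hv hε _)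
        (norm_tsum_sub_sum_range_le hw hε _))
    _ = 4 * ε (n + 1) := by ring

end Series

theorem measurable_tsum_of_summable {X G : Type*} [MeasurableSpace X] [AddCommMonoid G]
    [TopologicalSpace G] [ContinuousAdd G] [PseudoMetrizableSpace G] [SecondCountableTopology G]
    [MeasurableSpace G] [BorelSpace G] {f : ℕ → X → G} (hf : ∀ n, Measurable (f n))
    (hs : ∀ x, Summable fun n => f n x) : Measurable fun x => ∑' n, f n x :=
  measurable_of_tendsto_metrizable (fun _ => Finset.measurable_sum _ fun n _ => hf n)
    (tendsto_pi_nhds.2 fun x => (hs x).hasSum.tendsto_sum_nat)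

section Coding

variable {X : Type*} [MetricSpace X] {u : ℕ → X} {r : ℕ → ℝ}

open Classical in
noncomputable def DenseRange.approxIndex (hu : DenseRange u) {r : ℝ} (hr : 0 < r) (x : X) : ℕ :=
  Nat.find (hu.exists_dist_lt x hr)

theorem DenseRange.dist_approxIndex_lt (hu : DenseRange u) {r : ℝ} (hr : 0 < r) (x : X) :
    dist x (u (hu.approxIndex hr x)) < r :=
  Nat.find_spec (hu.exists_dist_lt x hr)

theorem DenseRange.measurable_approxIndex [MeasurableSpace X] [OpensMeasurableSpace X]
    (hu : DenseRange u) {r : ℝ} (hr : 0 < r) : Measurable (hu.approxIndex hr) :=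
  measurable_find _ fun _ =>
    (isOpen_lt (continuous_id.dist continuous_const) continuous_const).measurableSet

noncomputable def DenseRange.code (hu : DenseRange u) (hr : ∀ n, 0 < r n)
    (p : X × (ℕ → Bool) × (ℕ → Bool)) (n : ℕ) : ℕ × Bool × Bool :=
  (hu.approxIndex (hr n) p.1, p.2.1 n, p.2.2 n)

theorem DenseRange.measurable_code [MeasurableSpace X] [OpensMeasurableSpace X]
    (hu : DenseRange u) (hr : ∀ n, 0 < r n) (n : ℕ) : Measurable fun p => hu.code hr p n :=
  ((hu.measurable_approxIndex (hr n)).comp measurable_fst).prodMk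
    (((measurable_pi_apply n).comp (measurable_fst.comp measurable_snd)).prodMk
      ((measurable_pi_apply n).comp (measurable_snd.comp measurable_snd)))

theorem DenseRange.code_injective (hu : DenseRange u) (hr : ∀ n, 0 < r n)
    (hr0 : Tendsto r atTop (𝓝 0)) : Function.Injective (hu.code hr) := by
  rintro ⟨K, x, y⟩ ⟨K', x', y'⟩ hcode
  have hcode_n n : (_ : ℕ × Bool × Bool) = _ := congrFun hcode n
  simp only [DenseRange.code, Prod.mk.injEq] at hcode_n
  obtain rfl : x = x' := funext fun n => (hcode_n n).2.1
  obtain rfl : y = y' := funext fun n => (hcode_n n).2.2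
  suffices dist K K' ≤ 0 by rw [dist_le_zero.1 this]
  refine ge_of_tendsto (by simpa using hr0.const_mul 2) (Eventually.of_forall fun n => ?_)
  calc dist K K' ≤ dist K (u (hu.approxIndex (hr n) K)) + dist K' (u (hu.approxIndex (hr n) K)) :=
        dist_triangle_right _ _ _
    _ ≤ r n + r n := by
      refine add_le_add (hu.dist_approxIndex_lt _ _).le ?_
      rw [(hcode_n n).1]
      exact (hu.dist_approxIndex_lt _ _).le
    _ = 2 * r n := (two_mul _).symm

end Coding

theorem sub_mem_sub_of_not_disjoint_add_singleton {α : Type*} [AddCommGroup α] {A B : Set α}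
    {s s' : α} (h : ¬ Disjoint (A + {s}) (B + {s'})) : s - s' ∈ B - A := by
  obtain ⟨_, ⟨a, ha, _, rfl, rfl⟩, ⟨b, hb, _, rfl, hab⟩⟩ := Set.not_disjoint_iff.1 h
  exact ⟨b, hb, a, ha, sub_eq_sub_iff_add_eq_add.2 (hab.trans (add_comm _ _))⟩

section Translation

variable {G : Type*} [NormedAddCommGroup G]

theorem NonemptyCompacts.exists_mem_sub_norm_sub_lt {K K' : NonemptyCompacts G} {a : ℝ}
    (hK : dist K K' < a) (C : Set G) {x : G} (hx : x ∈ (K : Set G) - C) :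
    ∃ x' ∈ (K' : Set G) - C, ‖x - x'‖ < a := by
  obtain ⟨k, hk, c, hc, rfl⟩ := hx
  obtain ⟨k', hk', hkk'⟩ := exists_dist_lt_of_hausdorffDist_lt hk hK
    (hausdorffEDist_ne_top_of_nonempty_of_bounded K.nonempty K'.nonempty
      K.isCompact.isBounded K'.isCompact.isBounded)
  exact ⟨k' - c, sub_mem_sub hk' hc, by rwa [sub_sub_sub_cancel_right, ← dist_eq_norm]⟩

variable [CompleteSpace G] {u : ℕ → NonemptyCompacts G} {ε ρ r : ℕ → ℝ}
  {h : ℕ → ℕ × Bool × Bool → G}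

theorem disjoint_sub_add_tsum_code (C : Set G) (hu : DenseRange u) (hr : ∀ n, 0 < r n)
    (hr0 : Tendsto r atTop (𝓝 0)) (hnorm : ∀ n a, ‖h n a‖ ≤ ε n) (hε : ∀ n, ε (n + 1) ≤ ε n / 2)
    (hsmall : ∀ n, 4 * ε (n + 1) + 2 * r n < ρ n)
    (hsep : ∀ n a b, a ≠ b → ∀ d ∈ ((u b.1 : Set G) - C) - ((u a.1 : Set G) - C),
      ρ n < ‖h n a - h n b - d‖)
    {p q : NonemptyCompacts G × (ℕ → Bool) × (ℕ → Bool)} (hpq : p ≠ q) :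
    Disjoint ((p.1 : Set G) - C + {∑' n, h n (hu.code hr p n)})
      ((q.1 : Set G) - C + {∑' n, h n (hu.code hr q n)}) := by
  classical
  have hne : ∃ n, hu.code hr p n ≠ hu.code hr q n :=
    Function.ne_iff.1 ((hu.code_injective hr hr0).ne hpq)
  set n := Nat.find hne
  by_contra hmeet
  obtain ⟨y, hy, x, hx, hxy⟩ := Set.mem_sub.1 (sub_mem_sub_of_not_disjoint_add_singleton hmeet)
  obtain ⟨y', hy', hyy'⟩ :=
    NonemptyCompacts.exists_mem_sub_norm_sub_lt (hu.dist_approxIndex_lt (hr n) q.1) C hy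
  obtain ⟨x', hx', hxx'⟩ :=
    NonemptyCompacts.exists_mem_sub_norm_sub_lt (hu.dist_approxIndex_lt (hr n) p.1) C hx
  have htail := norm_tsum_sub_tsum_sub_sub_le (fun m => hnorm m (hu.code hr p m))
    (fun m => hnorm m (hu.code hr q m)) hε fun m hm =>
      congrArg (h m) (not_not.1 (Nat.find_min hne hm))
  refine (hsep n _ _ (Nat.find_spec hne) (y' - x') (sub_mem_sub hy' hx')).not_ge ?_
  calc ‖h n (hu.code hr p n) - h n (hu.code hr q n) - (y' - x')‖
      = ‖((h n (hu.code hr p n) - h n (hu.code hr q n)) - (y - x)) + ((y - y') - (x - x'))‖ := by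
        congr 1; abel
    _ ≤ 4 * ε (n + 1) + (r n + r n) := by
      refine norm_add_le_of_le (by rwa [norm_sub_rev, hxy]) ?_
      exact (norm_sub_le _ _).trans (add_le_add hyy'.le hxx'.le)
    _ ≤ ρ n := by linarith [hsmall n]

theorem continuous_tsum_code (hu : DenseRange u) (hr : ∀ n, 0 < r n)
    (hnorm : ∀ n a, ‖h n a‖ ≤ ε n) (hε : ∀ n, ε (n + 1) ≤ ε n / 2)
    (K : NonemptyCompacts G) (y : ℕ → Bool) :
    Continuous fun x : ℕ → Bool => ∑' n, h n (hu.code hr (K, x, y) n) :=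
  continuous_tsum (fun n => (continuous_of_discreteTopology (f := fun b : Bool =>
      h n (hu.approxIndex (hr n) K, b, y n))).comp (continuous_apply n))
    (summable_of_halving (fun n => (norm_nonneg _).trans (hnorm n (0, false, false))) hε)
    fun n _ => hnorm n _

end Translation

theorem NormedAddCommGroup.exists_disjointifying_translation {G : Type*} [NormedAddCommGroup G]
    [CompleteSpace G] [SecondCountableTopology G] [MeasurableSpace G] [BorelSpace G]
    [MeasurableSpace (NonemptyCompacts G)] [OpensMeasurableSpace (NonemptyCompacts G)]
    (hG : ¬ LocallyCompactSpace G) (C : Set G) (hC : IsCompact C) :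
    ∃ t : NonemptyCompacts G × (ℕ → Bool) × (ℕ → Bool) → G,
      Measurable t ∧
      (∀ p q : NonemptyCompacts G × (ℕ → Bool) × (ℕ → Bool), p ≠ q →
        Disjoint ((p.1 : Set G) - C + {t p}) ((q.1 : Set G) - C + {t q})) ∧
      (∀ (K : NonemptyCompacts G) (y : ℕ → Bool),
        Continuous fun x : ℕ → Bool => t (K, x, y)) := by
  obtain ⟨ε, ρ, hρ, hρε, hερ, hfar⟩ := exists_far_scales hG
  have hε n : ε (n + 1) ≤ ε n / 2 := by linarith [hρ n, hρε n, hερ n]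
  have hr n : 0 < ρ n / 4 := by linarith [hρ n]
  have hr0 : Tendsto (fun n => ρ n / 4) atTop (𝓝 0) :=
    squeeze_zero (fun n => (hr n).le) (fun n => by linarith [hρ n, hρε n])
      (summable_of_halving (fun n => (hρ n).le.trans (hρε n)) hε).tendsto_atTop_zero
  have : Nonempty (NonemptyCompacts G) := ⟨⟨⟨{0}, isCompact_singleton⟩, singleton_nonempty 0⟩⟩
  obtain ⟨u, hu⟩ := exists_dense_seq (NonemptyCompacts G)
  choose h hnorm hsep using fun n => exists_family_sub_far_from_compacts (hfar n)
    (fun a b : ℕ × Bool × Bool => ((u b.1 : Set G) - C) - ((u a.1 : Set G) - C))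
    fun a b => ((u b.1).isCompact.sub hC).sub ((u a.1).isCompact.sub hC)
  refine ⟨fun p => ∑' n, h n (hu.code hr p n), ?_, fun p q => disjoint_sub_add_tsum_code C hu hr hr0
      hnorm hε (fun n => by linarith [hερ n, hρ n]) hsep, continuous_tsum_code hu hr hnorm hε⟩
  exact measurable_tsum_of_summable
    (fun n => (measurable_of_countable (h n)).comp (hu.measurable_code hr n))
    fun p => summable_of_norm_le_halving (fun n => hnorm n _) hε

theorem exists_borel_disjointifying_translation_general
    {G : Type*} [MetricSpace G] [CompleteSpace G] [SecondCountableTopology G]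
    [AddCommGroup G] [MeasurableSpace G] [BorelSpace G]
    (hinv : ∀ a b c : G, dist (a + c) (b + c) = dist a b)
    (hG : ¬ LocallyCompactSpace G)
    (C : Set G) (hC : IsCompact C) :
    letI : MeasurableSpace (NonemptyCompacts G) := borel (NonemptyCompacts G)
    ∃ t : NonemptyCompacts G × (ℕ → Bool) × (ℕ → Bool) → G,
      Measurable t ∧
      (∀ p q : NonemptyCompacts G × (ℕ → Bool) × (ℕ → Bool), p ≠ q →
        Disjoint ((p.1 : Set G) - C + {t p}) ((q.1 : Set G) - C + {t q})) ∧
      (∀ (K : NonemptyCompacts G) (y : ℕ → Bool),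
        Continuous fun x : ℕ → Bool => t (K, x, y)) := by
  let : MeasurableSpace (NonemptyCompacts G) := borel (NonemptyCompacts G)
  have : BorelSpace (NonemptyCompacts G) := ⟨rfl⟩
  let : Norm G := ⟨dist 0⟩
  let : NormedAddCommGroup G := .ofAddDist (fun _ => rfl) fun x y z => by
    rw [add_comm z x, add_comm z y, hinv]
  exact NormedAddCommGroup.exists_disjointifying_translation hG C hC

/-- Let `G` be a non-locally compact abelian Polish group, with a fixed complete two-sided
invariant metric, and let `C ⊆ G` be a fixed compact set. Then there is a Borel map
`t : K(G) × 2^ω × 2^ω → G` (where `K(G)` is the space of nonempty compact subsets of `G` with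
the Hausdorff metric and its Borel σ-algebra) such that: (1) for distinct triples
`(K, x, y) ≠ (K', x', y')` the sets `K - C + t(K,x,y)` and `K' - C + t(K',x',y')` are
disjoint; and (2) for all `K` and `y`, the map `x ↦ t(K, x, y)` is continuous. -/
theorem exists_borel_disjointifying_translation
    {G : Type*} [MetricSpace G] [CompleteSpace G] [SecondCountableTopology G]
    [AddCommGroup G] [IsTopologicalAddGroup G] [MeasurableSpace G] [BorelSpace G]
    (hinv : ∀ a b c : G, dist (a + c) (b + c) = dist a b)
    (hG : ¬ LocallyCompactSpace G)
    (C : Set G) (hC : IsCompact C) :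
    letI : MeasurableSpace (NonemptyCompacts G) := borel (NonemptyCompacts G)
    ∃ t : NonemptyCompacts G × (ℕ → Bool) × (ℕ → Bool) → G,
      Measurable t ∧
      (∀ p q : NonemptyCompacts G × (ℕ → Bool) × (ℕ → Bool), p ≠ q →
        Disjoint ((p.1 : Set G) - C + {t p}) ((q.1 : Set G) - C + {t q})) ∧
      (∀ (K : NonemptyCompacts G) (y : ℕ → Bool),
        Continuous fun x : ℕ → Bool => t (K, x, y)) :=
  exists_borel_disjointifying_translation_general hinv hG C hC
end

section
/- Let G be a non-locally compact abelian Polish group with a complete two-sided invariant metric d, and let (Q_k)_{k∈ω} be an increasing sequence of finite subsets of G with 0 ∈ Q_0 and with ⋃_k Q_k dense in G. Then for every ε > 0 there exist δ > 0 and a sequence (g_k)_{k∈ω} of elements of the open ball B(0, ε) such that for all distinct k, k' ∈ ω, d(Q_k + g_k, Q_{k'} + g_{k'}) ≥ δ, where d(A, B) = inf{d(a, b) : a ∈ A, b ∈ B}. -/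
/-!
A complete group that is not locally compact has no totally bounded neighbourhood of `0`, so for
some `δ > 0` no finite set is a `δ`-net of `B(0, ε)`: every finite set has a point of `B(0, ε)`
at distance `≥ δ` from it. Choose `g k` recursively as such a point for the finite set
`⋃_{j < k} (Q j + g j - Q k)`; by invariance of the metric, `Q k + g k` is then `δ`-far from each
earlier `Q j + g j`.
-/

open Metric Pointwise Topology

theorem exists_seq_of_forall_exists_next {α : Type*} [Nonempty α] (P : α → Prop)
    (r : ℕ → α → ℕ → α → Prop)
    (h : ∀ n (x : ℕ → α), ∃ y, P y ∧ ∀ k < n, r k (x k) n y) :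
    ∃ f : ℕ → α, (∀ n, P (f n)) ∧ ∀ k n, k < n → r k (f k) n (f n) := by
  choose next hnext using h
  let f : ℕ → α := Nat.strongRec fun n prev =>
    next n fun k => if hk : k < n then prev k hk else Classical.arbitrary α
  have hf (n : ℕ) : f n = next n fun k => if k < n then f k else Classical.arbitrary α :=
    Nat.strongRec_eq _ n
  refine ⟨f, fun n => hf n ▸ (hnext _ _).1, fun k n hkn => ?_⟩
  have := (hnext n fun k => if k < n then f k else Classical.arbitrary α).2 k hkn
  rwa [if_pos hkn, ← hf] at this

theorem exists_forall_le_dist_of_not_totallyBounded {α : Type*} [PseudoMetricSpace α]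
    {s : Set α} (hs : ¬ TotallyBounded s) :
    ∃ δ > 0, ∀ F : Set α, F.Finite → ∃ y ∈ s, ∀ x ∈ F, δ ≤ dist y x := by
  contrapose! hs
  refine totallyBounded_iff.2 fun δ hδ => ?_
  obtain ⟨F, hF, hnet⟩ := hs δ hδ
  refine ⟨F, hF, fun y hy => ?_⟩
  obtain ⟨x, hx, hyx⟩ := hnet y hy
  exact Set.mem_biUnion hx hyx

theorem not_totallyBounded_of_mem_nhds {G : Type*} [UniformSpace G] [CompleteSpace G]
    [AddGroup G] [IsTopologicalAddGroup G] (hG : ¬ LocallyCompactSpace G) {s : Set G} {x : G}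
    (hs : s ∈ 𝓝 x) : ¬ TotallyBounded s := fun hbdd =>
  have hcpt : IsCompact (closure s) := hbdd.closure.isCompact_of_isClosed isClosed_closure
  hG <| hcpt.locallyCompactSpace_of_mem_nhds_of_addGroup (Filter.mem_of_superset hs subset_closure)

theorem exists_seq_separated_translates {G : Type*} [PseudoMetricSpace G] [AddCommGroup G]
    (hinv : ∀ a b c : G, dist (a + c) (b + c) = dist a b)
    (Q : ℕ → Set G) (hQfin : ∀ k, (Q k).Finite) {s : Set G} {δ : ℝ}
    (hfar : ∀ F : Set G, F.Finite → ∃ y ∈ s, ∀ x ∈ F, δ ≤ dist y x) :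
    ∃ g : ℕ → G, (∀ k, g k ∈ s) ∧
      ∀ k k' : ℕ, k ≠ k' → ∀ a ∈ Q k + {g k}, ∀ b ∈ Q k' + {g k'}, δ ≤ dist a b := by
  have hnext (n : ℕ) (x : ℕ → G) :
      ∃ y ∈ s, ∀ k < n, ∀ a ∈ Q k, ∀ b ∈ Q n, δ ≤ dist (a + x k) (b + y) := by
    have hF : (⋃ k ∈ Set.Iio n, Q k + {x k} - Q n).Finite :=
      (Set.finite_Iio n).biUnion fun k _ => ((hQfin k).add (Set.finite_singleton _)).sub (hQfin n)
    obtain ⟨y, hys, hy⟩ := hfar _ hF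
    refine ⟨y, hys, fun k hk a ha b hb => ?_⟩
    calc δ ≤ dist y (a + x k - b) :=
          hy _ (Set.mem_biUnion hk (Set.sub_mem_sub (Set.add_mem_add ha rfl) hb))
      _ = dist (a + x k) (b + y) := by
        rw [dist_comm, ← hinv _ _ b, sub_add_cancel, add_comm y]
  obtain ⟨g, hgs, hg⟩ := exists_seq_of_forall_exists_next (· ∈ s)
    (fun k x n y => ∀ a ∈ Q k, ∀ b ∈ Q n, δ ≤ dist (a + x) (b + y)) hnext
  refine ⟨g, hgs, ?_⟩
  have hsep (k k' : ℕ) (hkk' : k < k') (a : G) (ha : a ∈ Q k + {g k}) (b : G)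
      (hb : b ∈ Q k' + {g k'}) : δ ≤ dist a b := by
    obtain ⟨a, ha, _, rfl, rfl⟩ := ha
    obtain ⟨b, hb, _, rfl, rfl⟩ := hb
    exact hg k k' hkk' a ha b hb
  intro k k' hne a ha b hb
  rcases hne.lt_or_gt with hlt | hgt
  · exact hsep k k' hlt a ha b hb
  · exact dist_comm a b ▸ hsep k' k hgt b hb a ha

theorem exists_separated_translates_of_finite_sets_general
    {G : Type*} [MetricSpace G] [CompleteSpace G]
    [AddCommGroup G] [IsTopologicalAddGroup G]
    (hinv : ∀ a b c : G, dist (a + c) (b + c) = dist a b)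
    (hG : ¬ LocallyCompactSpace G)
    (Q : ℕ → Set G) (hQfin : ∀ k, (Q k).Finite)
    {ε : ℝ} (hε : 0 < ε) :
    ∃ δ > (0 : ℝ), ∃ g : ℕ → G,
      (∀ k, g k ∈ ball (0 : G) ε) ∧
      ∀ k k' : ℕ, k ≠ k' →
        ∀ a ∈ Q k + {g k}, ∀ b ∈ Q k' + {g k'}, δ ≤ dist a b := by
  obtain ⟨δ, hδ, hfar⟩ := exists_forall_le_dist_of_not_totallyBounded
    (not_totallyBounded_of_mem_nhds hG (ball_mem_nhds (0 : G) hε))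
  obtain ⟨g, hg, hsep⟩ := exists_seq_separated_translates hinv Q hQfin hfar
  exact ⟨δ, hδ, g, hg, hsep⟩

/-- Let `G` be a non-locally compact abelian Polish group with a complete two-sided invariant
metric `d = dist`, and let `(Q k)` be an increasing sequence of finite subsets of `G` with
`0 ∈ Q 0` and `⋃ k, Q k` dense in `G`. Then for every `ε > 0` there exist `δ > 0` and a
sequence `(g k)` of elements of the open ball `B(0, ε)` such that for all distinct `k, k'`,
`d(Q k + g k, Q k' + g k') ≥ δ`, i.e. `dist a b ≥ δ` for all `a ∈ Q k + g k` and
`b ∈ Q k' + g k'`. -/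
theorem exists_separated_translates_of_finite_sets
    {G : Type*} [MetricSpace G] [CompleteSpace G] [SecondCountableTopology G]
    [AddCommGroup G] [IsTopologicalAddGroup G]
    (hinv : ∀ a b c : G, dist (a + c) (b + c) = dist a b)
    (hG : ¬ LocallyCompactSpace G)
    (Q : ℕ → Set G) (hQfin : ∀ k, (Q k).Finite) (hQmono : Monotone Q)
    (hQ0 : (0 : G) ∈ Q 0) (hQdense : Dense (⋃ k, Q k))
    {ε : ℝ} (hε : 0 < ε) :
    ∃ δ > (0 : ℝ), ∃ g : ℕ → G,
      (∀ k, g k ∈ ball (0 : G) ε) ∧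
      ∀ k k' : ℕ, k ≠ k' →
        ∀ a ∈ Q k + {g k}, ∀ b ∈ Q k' + {g k'}, δ ≤ dist a b :=
  exists_separated_translates_of_finite_sets_general hinv hG Q hQfin hε
end

section
/- Let G be an abelian Polish group and let X ⊆ G be Haar null. Then there exist a Borel set B ⊇ X and a Borel probability measure μ on G with compact support such that μ(B + g) = 0 for every g ∈ G; that is, the witness measure in the definition of Haar nullness may always be taken to have compact support. -/
open MeasureTheory

/-- A set `X` in an abelian Polish group `G` is *Haar null* if there exist a Borel set `B ⊇ X`
and a Borel probability measure `μ` on `G` such that `μ(B + g) = 0` for every `g ∈ G`. -/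
def IsHaarNull {G : Type*} [AddCommGroup G] [MeasurableSpace G] (X : Set G) : Prop :=
  ∃ B : Set G, MeasurableSet B ∧ X ⊆ B ∧
    ∃ μ : Measure G, IsProbabilityMeasure μ ∧ ∀ g : G, μ ((fun b => b + g) '' B) = 0

/-- The support of a Borel measure `μ`: the smallest closed set of full measure, equivalently
the set of points all of whose open neighbourhoods have positive measure. -/
def measureSupport {G : Type*} [TopologicalSpace G] [MeasurableSpace G] (μ : Measure G) :
    Set G :=
  {g : G | ∀ U : Set G, IsOpen U → g ∈ U → 0 < μ U}

/-! A Borel probability measure `μ` on a Polish space is tight, so some compact `K`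
has `μ K > 0`. The conditional measure `μ[|K]` is a probability measure supported in `K` and
absolutely continuous with respect to `μ`, hence it still annihilates every translate of `B`. -/

open ProbabilityTheory

theorem measureSupport_eq_support {X : Type*} [TopologicalSpace X] [MeasurableSpace X]
    (μ : Measure X) : measureSupport μ = μ.support := by
  simp only [Measure.support_eq_forall_isOpen, measureSupport, imp.swap]

theorem support_cond_subset_closure {X : Type*} [TopologicalSpace X] [MeasurableSpace X]
    [OpensMeasurableSpace X] (μ : Measure X) (s : Set X) : μ[|s].support ⊆ closure s :=
  calc μ[|s].support ⊆ (μ.restrict s).support :=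
        Measure.smul_absolutelyContinuous.support_mono
    _ ⊆ closure s := Measure.support_restrict_subset.trans Set.inter_subset_left

theorem exists_isProbabilityMeasure_isCompact_support_absolutelyContinuous {X : Type*}
    [TopologicalSpace X] [R1Space X] [MeasurableSpace X] [OpensMeasurableSpace X]
    (μ : Measure X) [IsFiniteMeasure μ] [μ.InnerRegular] (hμ : μ ≠ 0) :
    ∃ ν : Measure X, IsProbabilityMeasure ν ∧ IsCompact ν.support ∧ ν ≪ μ := by
  obtain ⟨K, hK, hμK⟩ := Measure.InnerRegular.exists_isCompact_not_null.2 hμ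
  exact ⟨μ[|K], cond_isProbabilityMeasure hμK,
    hK.closure.of_isClosed_subset Measure.isClosed_support (support_cond_subset_closure μ K),
    cond_absolutelyContinuous⟩

theorem isHaarNull_witness_compact_support_general
    {G : Type*} [TopologicalSpace G] [PolishSpace G] [AddCommGroup G]
    [MeasurableSpace G] [BorelSpace G]
    (X : Set G) (hX : IsHaarNull X) :
    ∃ B : Set G, MeasurableSet B ∧ X ⊆ B ∧
      ∃ μ : Measure G, IsProbabilityMeasure μ ∧ IsCompact (measureSupport μ) ∧
        ∀ g : G, μ ((fun b => b + g) '' B) = 0 := by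
  obtain ⟨B, hB, hXB, μ, hμ, hμB⟩ := hX
  obtain ⟨ν, hν, hνK, hνμ⟩ :=
    exists_isProbabilityMeasure_isCompact_support_absolutelyContinuous μ
      (IsProbabilityMeasure.ne_zero μ)
  exact ⟨B, hB, hXB, ν, hν, measureSupport_eq_support ν ▸ hνK, fun g => hνμ (hμB g)⟩

/-- Let `G` be an abelian Polish group and `X ⊆ G` Haar null. Then there are a Borel set
`B ⊇ X` and a Borel probability measure `μ` on `G` with compact support such that
`μ(B + g) = 0` for every `g ∈ G`; i.e. the witness measure in the definition of Haar
nullness may always be taken to have compact support. -/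
theorem isHaarNull_witness_compact_support
    {G : Type*} [TopologicalSpace G] [PolishSpace G] [AddCommGroup G]
    [IsTopologicalAddGroup G] [MeasurableSpace G] [BorelSpace G]
    (X : Set G) (hX : IsHaarNull X) :
    ∃ B : Set G, MeasurableSet B ∧ X ⊆ B ∧
      ∃ μ : Measure G, IsProbabilityMeasure μ ∧ IsCompact (measureSupport μ) ∧
        ∀ g : G, μ ((fun b => b + g) '' B) = 0 :=
  isHaarNull_witness_compact_support_general X hX
end

section
/- Let G be an abelian Polish group. Then every σ-compact Haar null subset of G is contained in a Gδ Haar null set. -/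
open MeasureTheory

/-! Let `μ` witness that `X = ⋃ n, Kₙ` is Haar null, with `Kₙ` compact. If all translates of a
compact `K` have measure `< ε`, then so do all translates of `K + V` for a small neighbourhood `V`
of `0`: by outer regularity this holds locally uniformly in the translation `g`, hence uniformly
for `g` near the compact set `L - K`, where `L` is a compact set with `μ Lᶜ < ε` (tightness); for
`g` far from `L - K` the translate `K + V + g` misses `L`. Taking such open sets around every `Kₙ`
with errors `εₙ` of sum `< ε` and intersecting over `ε = n⁻¹` gives the `Gδ` set. -/

open Set Filter Topology Pointwise
open scoped ENNReal

section TopologicalAddGroup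

variable {G : Type*} [TopologicalSpace G] [AddCommGroup G] [IsTopologicalAddGroup G]

theorem IsCompact.eventually_image_add_right_add_subset {K W : Set G} (hK : IsCompact K)
    (hW : IsOpen W) {h : G} (hKW : (· + h) '' K ⊆ W) :
    ∀ᶠ p in (𝓝 (0 : G)).smallSets ×ˢ 𝓝 h, (· + p.2) '' (K + p.1) ⊆ W := by
  obtain ⟨V₀, hV₀, hKV₀⟩ :=
    compact_open_separated_add_right (hK.image (continuous_add_const h)) hW hKW
  obtain ⟨V, hV, hVV₀⟩ := exists_nhds_zero_half hV₀
  have hnear : ∀ᶠ g in 𝓝 h, g - h ∈ V :=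
    ((continuous_sub_right h).tendsto' h 0 (sub_self h)).eventually_mem hV
  filter_upwards [(eventually_smallSets_subset.2 hV).prod_mk hnear]
  rintro ⟨V', g⟩ ⟨hV', hg⟩ _ ⟨_, ⟨k, hk, v, hv, rfl⟩, rfl⟩
  show k + v + g ∈ W
  have hsum : (k + h) + (v + (g - h)) ∈ W :=
    hKV₀ ⟨k + h, ⟨k, hk, rfl⟩, v + (g - h), hVV₀ v (hV' hv) _ hg, rfl⟩
  convert hsum using 1
  abel

variable [MeasurableSpace G]

theorem IsCompact.eventually_measure_image_add_right_add_lt {μ : Measure G} [μ.OuterRegular]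
    {K : Set G} (hK : IsCompact K) {h : G} {ε : ℝ≥0∞} (hKε : μ ((· + h) '' K) < ε) :
    ∀ᶠ p in (𝓝 (0 : G)).smallSets ×ˢ 𝓝 h, μ ((· + p.2) '' (K + p.1)) < ε := by
  obtain ⟨W, hKW, hW, hWε⟩ := Set.exists_isOpen_lt_of_lt _ ε hKε
  filter_upwards [hK.eventually_image_add_right_add_subset hW hKW] with p hp
  exact (measure_mono hp).trans_lt hWε

end TopologicalAddGroup

section PolishAddGroup

variable {G : Type*} [TopologicalSpace G] [PolishSpace G] [AddCommGroup G]
  [IsTopologicalAddGroup G] [MeasurableSpace G] [BorelSpace G]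
  {μ : Measure G} [IsFiniteMeasure μ]

theorem IsCompact.eventually_smallSets_forall_measure_image_add_right_add_lt {K : Set G}
    (hK : IsCompact K) {ε : ℝ≥0∞} (hKε : ∀ g, μ ((· + g) '' K) < ε) :
    ∀ᶠ V in (𝓝 (0 : G)).smallSets, ∀ g, μ ((· + g) '' (K + V)) < ε := by
  obtain ⟨L, hL, hμL⟩ := exists_isCompact_closure_measure_compl_lt μ ε (pos_of_gt (hKε 0))
  have hC : IsCompact (closure L + -K) := hL.add hK.neg
  obtain ⟨P, hP, Q, hQ, hPQ⟩ := eventually_prod_iff.1 <| hC.mem_prod_nhdsSet_of_forall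
    fun h _ => hK.eventually_measure_image_add_right_add_lt (hKε h)
  obtain ⟨O, hO, hCO, hOQ⟩ := mem_nhdsSet_iff_exists.1 hQ
  obtain ⟨V', hV', hCV'⟩ := compact_open_separated_add_right hC hO hCO
  filter_upwards [hP, eventually_smallSets_subset.2 (neg_mem_nhds_zero G hV')] with V hPV hVV' g
  by_cases hg : g ∈ O
  · exact hPQ hPV (hOQ hg)
  have hmiss : (· + g) '' (K + V) ⊆ Lᶜ := by
    rintro _ ⟨_, ⟨k, hk, v, hv, rfl⟩, rfl⟩ (hl : k + v + g ∈ L)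
    refine hg (hCV' ⟨_, ⟨_, subset_closure hl, -k, neg_mem_neg.2 hk, rfl⟩, -v, hVV' hv, ?_⟩)
    dsimp only
    abel
  exact (measure_mono hmiss).trans_lt hμL

theorem IsCompact.exists_isOpen_superset_forall_measure_image_add_right_lt {K : Set G}
    (hK : IsCompact K) {ε : ℝ≥0∞} (hKε : ∀ g, μ ((· + g) '' K) < ε) :
    ∃ U, IsOpen U ∧ K ⊆ U ∧ ∀ g, μ ((· + g) '' U) < ε := by
  obtain ⟨V, hV, hVε⟩ :=
    eventually_smallSets.1 (hK.eventually_smallSets_forall_measure_image_add_right_add_lt hKε)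
  exact ⟨K + interior V, isOpen_interior.add_left,
    subset_add_left K (mem_interior_iff_mem_nhds.2 hV), hVε _ interior_subset⟩

theorem IsSigmaCompact.exists_isOpen_superset_forall_measure_image_add_right_lt {X : Set G}
    (hX : IsSigmaCompact X) (hX0 : ∀ g, μ ((· + g) '' X) = 0) {ε : ℝ≥0∞} (hε : ε ≠ 0) :
    ∃ U, IsOpen U ∧ X ⊆ U ∧ ∀ g, μ ((· + g) '' U) < ε := by
  obtain ⟨K, hK, rfl⟩ := hX
  obtain ⟨δ, hδ, hδε⟩ := ENNReal.exists_pos_sum_of_countable' hε ℕ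
  choose U hU hKU hUδ using fun n =>
    (hK n).exists_isOpen_superset_forall_measure_image_add_right_lt fun g =>
      (measure_mono_null (image_mono (subset_iUnion K n)) (hX0 g)).trans_lt (hδ n)
  refine ⟨⋃ n, U n, isOpen_iUnion hU, iUnion_mono hKU, fun g => ?_⟩
  calc μ ((· + g) '' ⋃ n, U n) = μ (⋃ n, (· + g) '' U n) := by rw [image_iUnion]
    _ ≤ ∑' n, μ ((· + g) '' U n) := measure_iUnion_le _
    _ ≤ ∑' n, δ n := ENNReal.tsum_le_tsum fun n => (hUδ n g).le
    _ < ε := hδε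

theorem IsSigmaCompact.exists_isGδ_superset_forall_measure_image_add_right_eq_zero {X : Set G}
    (hX : IsSigmaCompact X) (hX0 : ∀ g, μ ((· + g) '' X) = 0) :
    ∃ S, IsGδ S ∧ X ⊆ S ∧ ∀ g, μ ((· + g) '' S) = 0 := by
  choose U hU hXU hUμ using fun n : ℕ =>
    hX.exists_isOpen_superset_forall_measure_image_add_right_lt hX0
      (ENNReal.inv_ne_zero.2 (ENNReal.natCast_ne_top n))
  refine ⟨⋂ n, U n, .iInter_of_isOpen hU, subset_iInter hXU, fun g => ?_⟩
  by_contra hne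
  obtain ⟨n, hn⟩ := ENNReal.exists_inv_nat_lt hne
  exact (hn.trans_le (measure_mono (image_mono (iInter_subset U n)))).not_gt (hUμ n g)

end PolishAddGroup

/-- Let `G` be an abelian Polish group. Then every σ-compact Haar null subset of `G` is
contained in a `Gδ` Haar null set. -/
theorem sigmaCompact_haarNull_subset_Gdelta_haarNull
    {G : Type*} [TopologicalSpace G] [PolishSpace G] [AddCommGroup G]
    [IsTopologicalAddGroup G] [MeasurableSpace G] [BorelSpace G]
    (X : Set G) (hXsc : IsSigmaCompact X) (hX : IsHaarNull X) :
    ∃ S : Set G, IsGδ S ∧ X ⊆ S ∧ IsHaarNull S := by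
  obtain ⟨B, -, hXB, μ, hμ, hBμ⟩ := hX
  obtain ⟨S, hS, hXS, hSμ⟩ :=
    hXsc.exists_isGδ_superset_forall_measure_image_add_right_eq_zero (μ := μ)
      fun g => measure_mono_null (image_mono hXB) (hBμ g)
  exact ⟨S, hS, hXS, S, hS.measurableSet, subset_rfl, μ, hμ, hSμ⟩
end

section
/- Let G be a locally compact abelian Polish group. Then every Haar null subset of G is contained in a Gδ Haar null set. -/
/-! A Haar null Borel set `B`, witnessed by `μ`, is null for Haar measure `ν`: by Fubini, the
`ν ⊗ μ`-measure of `{(x, y) | x + y ∈ B}` is `∫ μ(B - x) dν(x) = 0` and also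
`∫ ν(B - y) dμ(y) = ν B`. Outer regularity of `ν` then gives a `Gδ` set `S ⊇ B` with `ν S = 0`,
and the normalised restriction of `ν` to a compact set of positive measure witnesses that `S` is
Haar null. -/

open MeasureTheory

open Set ENNReal

theorem measure_eq_zero_of_forall_measure_preimage_add_left_eq_zero {G : Type*} [AddGroup G]
    [MeasurableSpace G] [MeasurableAdd₂ G] {ν μ : Measure G} [SFinite ν] [SFinite μ]
    [ν.IsAddRightInvariant] (hμ₀ : μ ≠ 0) {B : Set G} (hB : MeasurableSet B)
    (hμB : ∀ g, μ ((g + ·) ⁻¹' B) = 0) : ν B = 0 := by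
  set A := (fun p : G × G => p.1 + p.2) ⁻¹' B
  have hA : MeasurableSet A := measurable_add hB
  have h_left : ν.prod μ A = 0 := by
    rw [Measure.prod_apply hA]
    exact lintegral_eq_zero_of_ae_eq_zero (.of_forall hμB)
  have h_right : ν.prod μ A = ν B * μ univ := by
    rw [Measure.prod_apply_symm hA]
    have h_slice (y : G) : ν ((·, y) ⁻¹' A) = ν B := measure_preimage_add_right ν y B
    simp_rw [h_slice, lintegral_const]
  rw [h_left, eq_comm, mul_eq_zero] at h_right
  exact h_right.resolve_right (Measure.measure_univ_ne_zero.2 hμ₀)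

theorem exists_isGδ_superset_measure_eq_zero {α : Type*} [TopologicalSpace α] [MeasurableSpace α]
    {ν : Measure α} [ν.OuterRegular] {s : Set α} (hs : ν s = 0) :
    ∃ t, s ⊆ t ∧ IsGδ t ∧ ν t = 0 := by
  have h_open (n : ℕ) : ∃ U, U ⊇ s ∧ IsOpen U ∧ ν U < (n : ℝ≥0∞)⁻¹ :=
    s.exists_isOpen_lt_of_lt _ (hs ▸ ENNReal.inv_pos.2 (natCast_ne_top n))
  choose U hsU hU hνU using h_open
  refine ⟨⋂ n, U n, subset_iInter hsU, .iInter_of_isOpen hU, ?_⟩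
  refine le_antisymm (ge_of_tendsto' ENNReal.tendsto_inv_nat_nhds_zero fun n => ?_) zero_le
  exact (measure_mono (iInter_subset U n)).trans (hνU n).le

theorem isHaarNull_of_measure_eq_zero {G : Type*} [AddCommGroup G] [MeasurableSpace G]
    [MeasurableAdd G] {ν μ : Measure G} [ν.IsAddRightInvariant] [IsProbabilityMeasure μ]
    (hμν : μ ≪ ν) {S : Set G} (hS : MeasurableSet S) (hνS : ν S = 0) : IsHaarNull S := by
  refine ⟨S, hS, subset_rfl, μ, inferInstance, fun g => hμν ?_⟩
  rw [image_add_right, measure_preimage_add_right, hνS]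

/-- Let `G` be a locally compact abelian Polish group. Then every Haar null subset of `G` is
contained in a `Gδ` Haar null set. -/
theorem haarNull_subset_Gdelta_haarNull_of_locallyCompact
    {G : Type*} [TopologicalSpace G] [PolishSpace G] [AddCommGroup G]
    [IsTopologicalAddGroup G] [MeasurableSpace G] [BorelSpace G]
    [LocallyCompactSpace G]
    (X : Set G) (hX : IsHaarNull X) :
    ∃ S : Set G, IsGδ S ∧ X ⊆ S ∧ IsHaarNull S := by
  obtain ⟨B, hB, hXB, μ, hμ, hμB⟩ := hX
  let K : TopologicalSpace.PositiveCompacts G := Classical.arbitrary _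
  let ν := Measure.addHaarMeasure K
  have hνB : ν B = 0 := by
    refine measure_eq_zero_of_forall_measure_preimage_add_left_eq_zero
      (IsProbabilityMeasure.ne_zero μ) hB fun g => ?_
    simpa [image_add_right, add_comm] using hμB (-g)
  obtain ⟨S, hBS, hSGδ, hνS⟩ := exists_isGδ_superset_measure_eq_zero hνB
  have : IsProbabilityMeasure (ν.restrict K) :=
    ⟨by rw [Measure.restrict_apply_univ, Measure.addHaarMeasure_self]⟩
  exact ⟨S, hSGδ, hXB.trans hBS,
    isHaarNull_of_measure_eq_zero (μ := ν.restrict K)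
      Measure.restrict_le_self.absolutelyContinuous hSGδ.measurableSet hνS⟩
end
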